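/- arXiv:1701.07486 — 2 statements merged into one kernel-verified Lean document; each statement's English description precedes it below -/
import Mathlib

section
/- If B is a Riemann matrix (symmetric with positive definite imaginary part) and [[A,B'],[C,D]] is a real symplectic matrix, then CB + D is invertible. -/
/-!
Write `P = A B + B'` and `Q = C B + D`. The symplectic relations give the identity
`Pᴴ Q - Qᴴ P = B̄ - B = -2i Im B`, which is the transformation law of `Im B` under the action
`B ↦ P Q⁻¹` of the symplectic group on the Siegel upper half space. If `Q v = 0` for some `v ≠ 0`,
pairing this identity with `v` gives `v* (Im B) v = 0`, contradicting positive definiteness.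
-/

open Matrix Complex

open scoped ComplexOrder

namespace Matrix

section Symplectic

variable {n R : Type*} [Fintype n] [DecidableEq n] [CommRing R]

-- Not `Matrix.symplecticGroup`, which uses `J = [[0, -1], [1, 0]]` and the condition `M J Mᵀ = J`.
def IsSymplecticBlocks (A B C D : Matrix n n R) : Prop :=
  (fromBlocks A B C D)ᵀ * fromBlocks 0 1 (-1) 0 * fromBlocks A B C D = fromBlocks 0 1 (-1) 0

namespace IsSymplecticBlocks

variable {A B C D : Matrix n n R}

theorem map (h : IsSymplecticBlocks A B C D) {S : Type*} [CommRing S] (f : R →+* S) :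
    IsSymplecticBlocks (A.map f) (B.map f) (C.map f) (D.map f) := by
  simpa [IsSymplecticBlocks, fromBlocks_map, transpose_map, Matrix.map_neg] using
    congrArg f.mapMatrix h

theorem relations (h : IsSymplecticBlocks A B C D) :
    Aᵀ * C = Cᵀ * A ∧ Aᵀ * D - Cᵀ * B = 1 ∧ Bᵀ * D = Dᵀ * B := by
  simp only [IsSymplecticBlocks, fromBlocks_transpose, fromBlocks_multiply, fromBlocks_inj,
    Matrix.mul_zero, Matrix.mul_one, Matrix.mul_neg, zero_add, add_zero,
    Matrix.neg_mul, neg_add_eq_sub, sub_eq_zero] at h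
  exact ⟨h.1, h.2.1, h.2.2.2⟩

theorem transpose_mul_sub (h : IsSymplecticBlocks A B C D) {Z : Matrix n n R} (hZ : Z.IsSymm)
    (W : Matrix n n R) :
    (A * Z + B)ᵀ * (C * W + D) - (C * Z + D)ᵀ * (A * W + B) = Z - W := by
  obtain ⟨hAC, hAD, hBD⟩ := h.relations
  have hDA : Dᵀ * A - Bᵀ * C = 1 := by
    simpa [transpose_sub, transpose_mul] using congrArg transpose hAD
  rw [transpose_add, transpose_add, transpose_mul, transpose_mul, hZ.eq]
  calc (Z * Aᵀ + Bᵀ) * (C * W + D) - (Z * Cᵀ + Dᵀ) * (A * W + B)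
      = Z * (Aᵀ * C - Cᵀ * A) * W + Z * (Aᵀ * D - Cᵀ * B) - (Dᵀ * A - Bᵀ * C) * W
          + (Bᵀ * D - Dᵀ * B) := by noncomm_ring
    _ = Z - W := by rw [hAC, hAD, hDA, hBD]; simp

end IsSymplecticBlocks

end Symplectic

section Complexification

variable {n : Type*}

theorem PosDef.map_ofReal [Fintype n] {M : Matrix n n ℝ} (hM : M.PosDef) :
    (M.map ((↑) : ℝ → ℂ)).PosDef := by
  refine posDef_iff_dotProduct_mulVec.mpr ⟨?_, fun v hv => ?_⟩
  · ext i j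
    simpa using congrFun₂ hM.isHermitian i j
  set x : n → ℝ := fun i => (v i).re
  set y : n → ℝ := fun i => (v i).im
  have hform : star v ⬝ᵥ (M.map ((↑) : ℝ → ℂ) *ᵥ v) = ↑(x ⬝ᵥ (M *ᵥ x) + y ⬝ᵥ (M *ᵥ y)) := by
    have hsymm : ∀ i j, M j i = M i j := fun i j => congrFun₂ hM.isHermitian i j
    apply Complex.ext
    · simp [x, y, dotProduct, mulVec, Finset.mul_sum, re_sum, ← Finset.sum_add_distrib]
    · simp only [dotProduct, Pi.star_apply, RCLike.star_def, mulVec, map_apply, Finset.mul_sum,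
        im_sum, mul_im, conj_re, ofReal_re, ofReal_im, zero_mul, add_zero, conj_im, mul_re,
        sub_zero, neg_mul, ← sub_eq_add_neg, Finset.sum_sub_distrib, sub_eq_zero]
      rw [Finset.sum_comm]
      refine Finset.sum_congr rfl fun i _ => Finset.sum_congr rfl fun j _ => ?_
      rw [hsymm]
      ring
  have hxy : x ≠ 0 ∨ y ≠ 0 := by
    by_contra! h
    exact hv (funext fun i => Complex.ext (congrFun h.1 i) (congrFun h.2 i))
  rw [hform, zero_lt_real]
  have hx : 0 ≤ x ⬝ᵥ (M *ᵥ x) := by simpa using hM.posSemidef.dotProduct_mulVec_nonneg x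
  have hy : 0 ≤ y ⬝ᵥ (M *ᵥ y) := by simpa using hM.posSemidef.dotProduct_mulVec_nonneg y
  rcases hxy with h | h
  · exact add_pos_of_pos_of_nonneg (by simpa using hM.dotProduct_mulVec_pos h) hy
  · exact add_pos_of_nonneg_of_pos hx (by simpa using hM.dotProduct_mulVec_pos h)

theorem map_star_sub_self (B : Matrix n n ℂ) :
    B.map star - B = (-2 * I) • (B.map im).map ((↑) : ℝ → ℂ) := by
  ext i j
  simp [Complex.ext_iff]
  ring

theorem conjTranspose_ofReal_mul_add [Fintype n] (C D : Matrix n n ℝ) (Z : Matrix n n ℂ) :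
    (C.map ((↑) : ℝ → ℂ) * Z + D.map ((↑) : ℝ → ℂ))ᴴ =
      (C.map ((↑) : ℝ → ℂ) * Z.map star + D.map ((↑) : ℝ → ℂ))ᵀ := by
  ext i j
  simp [mul_apply, mul_comm]

end Complexification

end Matrix

/-- If `B` is a Riemann matrix (symmetric with positive definite imaginary
part) and `[[A,B'],[C,D]]` is a real symplectic matrix, then `CB + D` is
invertible. -/
theorem symplectic_CB_plus_D_invertible (g : ℕ)
    (B : Matrix (Fin g) (Fin g) ℂ) (hBsymm : B.IsSymm)
    (hY : (Matrix.of fun i j => (B i j).im).PosDef)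
    (A B' C D : Matrix (Fin g) (Fin g) ℝ)
    (hM : (Matrix.fromBlocks A B' C D)ᵀ *
          Matrix.fromBlocks (0 : Matrix (Fin g) (Fin g) ℝ) (1 : Matrix (Fin g) (Fin g) ℝ)
            (-1 : Matrix (Fin g) (Fin g) ℝ) (0 : Matrix (Fin g) (Fin g) ℝ) *
          Matrix.fromBlocks A B' C D
        = Matrix.fromBlocks (0 : Matrix (Fin g) (Fin g) ℝ) (1 : Matrix (Fin g) (Fin g) ℝ)
            (-1 : Matrix (Fin g) (Fin g) ℝ) (0 : Matrix (Fin g) (Fin g) ℝ)) :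
    IsUnit (C.map (Complex.ofReal) * B + D.map (Complex.ofReal)).det := by
  have hMℂ : IsSymplecticBlocks (A.map ofReal) (B'.map ofReal) (C.map ofReal) (D.map ofReal) :=
    IsSymplecticBlocks.map hM ofRealHom
  have key := hMℂ.transpose_mul_sub (hBsymm.map star) B
  rw [← conjTranspose_ofReal_mul_add C D, map_star_sub_self] at key
  rw [isUnit_iff_ne_zero]
  intro hdet
  obtain ⟨v, hv, hQv⟩ := exists_mulVec_eq_zero_iff.mpr hdet
  have hform : star v ⬝ᵥ (((-2 * I) • (B.map im).map ((↑) : ℝ → ℂ)) *ᵥ v) = 0 := by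
    rw [← key, sub_mulVec, ← mulVec_mulVec, ← mulVec_mulVec, hQv, mulVec_zero, zero_sub,
      dotProduct_neg, dotProduct_mulVec, vecMul_conjTranspose, star_star, hQv]
    simp
  rw [smul_mulVec, dotProduct_smul, smul_eq_mul, mul_eq_zero] at hform
  exact (hY.map_ofReal.dotProduct_mulVec_pos hv).ne' (hform.resolve_left (by simp))
end

section
/- If a basis (t₁, t₂) of a two-dimensional lattice satisfies ‖t₁‖ ≤ ‖t₂‖ and |⟨t₁,t₂⟩| ≤ ‖t₁‖²/2 (i.e. it is Gauss reduced), then t₁ is a shortest nonzero vector of the lattice generated by t₁ and t₂. -/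
/-! For `(a, b) ≠ 0` the integer quadratic form `a² - |ab| + b²` is at least `1`, while the
reduction conditions give `‖a t₁ + b t₂‖² ≥ (a² - |ab| + b²) ‖t₁‖²`: the cross term
`2ab⟨t₁, t₂⟩` costs at most `|ab| ‖t₁‖²`, and `‖t₂‖ ≥ ‖t₁‖`. -/

theorem Int.one_le_sq_sub_abs_mul_add_sq {a b : ℤ} (hab : ¬(a = 0 ∧ b = 0)) :
    1 ≤ a ^ 2 - |a * b| + b ^ 2 := by
  rw [abs_mul, ← sq_abs a, ← sq_abs b]
  by_cases ha : a = 0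
  · have hb : 1 ≤ |b| := Int.one_le_abs fun hb => hab ⟨ha, hb⟩
    simp only [ha, abs_zero]
    nlinarith
  by_cases hb : b = 0
  · have ha' : 1 ≤ |a| := Int.one_le_abs ha
    simp only [hb, abs_zero]
    nlinarith
  have ha' : 1 ≤ |a| := Int.one_le_abs ha
  have hb' : 1 ≤ |b| := Int.one_le_abs hb
  nlinarith [sq_nonneg (|a| - |b|)]

theorem sq_sub_abs_mul_add_sq_mul_norm_sq_le {E : Type*} [NormedAddCommGroup E]
    [InnerProductSpace ℝ E] {x y : E} (hord : ‖x‖ ≤ ‖y‖)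
    (hred : |(inner ℝ x y : ℝ)| ≤ ‖x‖ ^ 2 / 2) (A B : ℝ) :
    (A ^ 2 - |A * B| + B ^ 2) * ‖x‖ ^ 2 ≤ ‖A • x + B • y‖ ^ 2 := by
  have expand : ‖A • x + B • y‖ ^ 2
      = A ^ 2 * ‖x‖ ^ 2 + 2 * (A * B * inner ℝ x y) + B ^ 2 * ‖y‖ ^ 2 := by
    rw [norm_add_sq_real, real_inner_smul_left, real_inner_smul_right, norm_smul, norm_smul,
      Real.norm_eq_abs, Real.norm_eq_abs, mul_pow, mul_pow, sq_abs, sq_abs]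
    ring
  have cross : -(|A * B| * (‖x‖ ^ 2 / 2)) ≤ A * B * inner ℝ x y := by
    have : |A * B * inner ℝ x y| ≤ |A * B| * (‖x‖ ^ 2 / 2) := by
      rw [abs_mul]
      exact mul_le_mul_of_nonneg_left hred (abs_nonneg _)
    linarith [neg_abs_le (A * B * inner ℝ x y)]
  have hsq : ‖x‖ ^ 2 ≤ ‖y‖ ^ 2 := pow_le_pow_left₀ (norm_nonneg x) hord 2
  rw [expand]
  nlinarith [mul_le_mul_of_nonneg_left hsq (sq_nonneg B)]

theorem gauss_reduced_shortest_general (t₁ t₂ : EuclideanSpace ℝ (Fin 2))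
    (hord : ‖t₁‖ ≤ ‖t₂‖)
    (hred : |(inner ℝ t₁ t₂ : ℝ)| ≤ ‖t₁‖ ^ 2 / 2) :
    ∀ a b : ℤ, ¬(a = 0 ∧ b = 0) → ‖t₁‖ ≤ ‖(a : ℝ) • t₁ + (b : ℝ) • t₂‖ := by
  intro a b hab
  have hform : (1 : ℝ) ≤ (a : ℝ) ^ 2 - |(a : ℝ) * b| + (b : ℝ) ^ 2 := by
    exact_mod_cast Int.one_le_sq_sub_abs_mul_add_sq hab
  have hsq : ‖t₁‖ ^ 2 ≤ ‖(a : ℝ) • t₁ + (b : ℝ) • t₂‖ ^ 2 :=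
    calc ‖t₁‖ ^ 2 ≤ ((a : ℝ) ^ 2 - |(a : ℝ) * b| + (b : ℝ) ^ 2) * ‖t₁‖ ^ 2 :=
          le_mul_of_one_le_left (sq_nonneg _) hform
      _ ≤ _ := sq_sub_abs_mul_add_sq_mul_norm_sq_le hord hred a b
  exact pow_le_pow_iff_left₀ (norm_nonneg _) (norm_nonneg _) two_ne_zero |>.mp hsq

/-- If a basis `(t₁, t₂)` of a two-dimensional lattice in `ℝ²` satisfies
`‖t₁‖ ≤ ‖t₂‖` and `|⟨t₁,t₂⟩| ≤ ‖t₁‖²/2` (i.e. it is Gauss reduced), then `t₁`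
is a shortest nonzero vector of the lattice `{a t₁ + b t₂ : a, b ∈ ℤ}`. -/
theorem gauss_reduced_shortest (t₁ t₂ : EuclideanSpace ℝ (Fin 2))
    (hli : LinearIndependent ℝ ![t₁, t₂])
    (hord : ‖t₁‖ ≤ ‖t₂‖)
    (hred : |(inner ℝ t₁ t₂ : ℝ)| ≤ ‖t₁‖ ^ 2 / 2) :
    ∀ a b : ℤ, ¬(a = 0 ∧ b = 0) → ‖t₁‖ ≤ ‖(a : ℝ) • t₁ + (b : ℝ) • t₂‖ :=
  gauss_reduced_shortest_general t₁ t₂ hord hred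
end
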